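/- arXiv:2511.15180 — 4 statements merged into one kernel-verified Lean document; each statement's English description precedes it below -/
import Mathlib

section
/- Let (h,u) be a C² smooth solution of the radially symmetric isentropic Euler equations in sound-speed form on an open set contained in {r > 0}, with h > 0 and c₁ c₂ ≠ 0 everywhere on that set. Then the gradient variable β satisfies the Riccati-type equation ∂₁ β = −((1+γ)/4) β² − ((3−γ)/4) α β + A₁ α − B₁ β, where A₁ = (m c₂/(2 r c₁²)) ((γ−1)/2 · u² − h²) and B₁ = (m/(r c₁²)) ( (γ−1)/4 · u³ − h³/2 − (γ−1)/4 · u² h + u h²/2 + (h u c₁/c₂)(h + ((γ−1)/2) u) ). -/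
open Real Set

/-- Partial derivative with respect to the spatial variable `r` (first coordinate). -/
noncomputable def pdr (f : ℝ × ℝ → ℝ) (p : ℝ × ℝ) : ℝ := fderiv ℝ f p (1, 0)

/-- Partial derivative with respect to the time variable `t` (second coordinate). -/
noncomputable def pdt (f : ℝ × ℝ → ℝ) (p : ℝ × ℝ) : ℝ := fderiv ℝ f p (0, 1)

/-- Directional derivative `∂_t + c ∂_r` along a characteristic with speed `c`. -/
noncomputable def Dc (c f : ℝ × ℝ → ℝ) (p : ℝ × ℝ) : ℝ := pdt f p + c p * pdr f p

/-- `(h,u)` solves the radially symmetric isentropic Euler equations in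
sound-speed form on the set `U`. -/
def IsEulerSound (γ : ℝ) (m : ℕ) (U : Set (ℝ × ℝ)) (h u : ℝ × ℝ → ℝ) : Prop :=
  ∀ p ∈ U,
    pdt h p + u p * pdr h p + (γ - 1) / 2 * h p * pdr u p
      = -((γ - 1) / 2) * ((m : ℝ) * u p * h p / p.1) ∧
    pdt u p + u p * pdr u p + 2 / (γ - 1) * h p * pdr h p = 0

/-- The gradient variable `α = u_r + (2/(γ-1)) h_r + m h u / (r c₂)`. -/
noncomputable def alp (γ : ℝ) (m : ℕ) (h u : ℝ × ℝ → ℝ) (p : ℝ × ℝ) : ℝ :=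
  pdr u p + 2 / (γ - 1) * pdr h p + (m : ℝ) * h p * u p / (p.1 * (u p + h p))

/-- The gradient variable `β = u_r - (2/(γ-1)) h_r - m h u / (r c₁)`. -/
noncomputable def bet (γ : ℝ) (m : ℕ) (h u : ℝ × ℝ → ℝ) (p : ℝ × ℝ) : ℝ :=
  pdr u p - 2 / (γ - 1) * pdr h p - (m : ℝ) * h p * u p / (p.1 * (u p - h p))

/-- The weighted gradient variable `α̃ = h^{(γ-3)/(2(γ-1))} α`. -/
noncomputable def alpT (γ : ℝ) (m : ℕ) (h u : ℝ × ℝ → ℝ) (p : ℝ × ℝ) : ℝ :=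
  h p ^ ((γ - 3) / (2 * (γ - 1))) * alp γ m h u p

/-- The weighted gradient variable `β̃ = h^{(γ-3)/(2(γ-1))} β`. -/
noncomputable def betT (γ : ℝ) (m : ℕ) (h u : ℝ × ℝ → ℝ) (p : ℝ × ℝ) : ℝ :=
  h p ^ ((γ - 3) / (2 * (γ - 1))) * bet γ m h u p

private lemma pd_add {f g : ℝ × ℝ → ℝ} {p v : ℝ × ℝ}
    (hf : DifferentiableAt ℝ f p) (hg : DifferentiableAt ℝ g p) :
    fderiv ℝ (fun q => f q + g q) p v = fderiv ℝ f p v + fderiv ℝ g p v := by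
  rw [fderiv_fun_add hf hg]; simp

private lemma pd_sub {f g : ℝ × ℝ → ℝ} {p v : ℝ × ℝ}
    (hf : DifferentiableAt ℝ f p) (hg : DifferentiableAt ℝ g p) :
    fderiv ℝ (fun q => f q - g q) p v = fderiv ℝ f p v - fderiv ℝ g p v := by
  rw [fderiv_fun_sub hf hg]; simp

private lemma pd_mul {f g : ℝ × ℝ → ℝ} {p v : ℝ × ℝ}
    (hf : DifferentiableAt ℝ f p) (hg : DifferentiableAt ℝ g p) :
    fderiv ℝ (fun q => f q * g q) p v = fderiv ℝ f p v * g p + f p * fderiv ℝ g p v := by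
  rw [fderiv_fun_mul hf hg]; simp; ring

private lemma pd_const_mul {f : ℝ × ℝ → ℝ} {p v : ℝ × ℝ} (c : ℝ)
    (hf : DifferentiableAt ℝ f p) :
    fderiv ℝ (fun q => c * f q) p v = c * fderiv ℝ f p v := by
  rw [fderiv_const_mul hf]; simp

private lemma pd_inv {g : ℝ × ℝ → ℝ} {p v : ℝ × ℝ}
    (hg : DifferentiableAt ℝ g p) (h0 : g p ≠ 0) :
    fderiv ℝ (fun q => (g q)⁻¹) p v = -fderiv ℝ g p v / g p ^ 2 := by
  have h := ((hasDerivAt_inv h0).comp_hasFDerivAt p hg.hasFDerivAt).fderiv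
  have e : (fun q => (g q)⁻¹) = (fun y : ℝ => y⁻¹) ∘ g := rfl
  rw [e, h]; simp; ring

private lemma pd_div {f g : ℝ × ℝ → ℝ} {p v : ℝ × ℝ}
    (hf : DifferentiableAt ℝ f p) (hg : DifferentiableAt ℝ g p) (h0 : g p ≠ 0) :
    fderiv ℝ (fun q => f q / g q) p v
      = (fderiv ℝ f p v * g p - f p * fderiv ℝ g p v) / g p ^ 2 := by
  simp only [div_eq_mul_inv]
  rw [pd_mul (g := fun q => (g q)⁻¹) hf (hg.inv h0), pd_inv hg h0]
  field_simp
  ring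

private lemma pd_divAt {f g : ℝ × ℝ → ℝ} {p : ℝ × ℝ}
    (hf : DifferentiableAt ℝ f p) (hg : DifferentiableAt ℝ g p) (h0 : g p ≠ 0) :
    DifferentiableAt ℝ (fun q => f q / g q) p := by
  simp only [div_eq_mul_inv]; exact hf.mul (hg.inv h0)

private lemma pd_fst {p v : ℝ × ℝ} : fderiv ℝ (fun q : ℝ × ℝ => q.1) p v = v.1 := by
  have e : (fun q : ℝ × ℝ => q.1) = Prod.fst := rfl
  rw [e, fderiv_fst]; rfl

set_option maxHeartbeats 1000000000 in
/-- Riccati-type equation `∂₁β = -((1+γ)/4)β² - ((3-γ)/4)αβ + A₁α - B₁β`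
for a `C²` smooth solution of the sound-speed Euler system with `h > 0` and
`c₁c₂ ≠ 0` on an open set contained in `{r > 0}`. -/
theorem riccati_beta
    (γ : ℝ) (hγ : 1 < γ) (m : ℕ) (hm : 1 ≤ m)
    (U : Set (ℝ × ℝ)) (hU : IsOpen U) (hUr : ∀ p ∈ U, 0 < p.1)
    (h u : ℝ × ℝ → ℝ) (hhpos : ∀ p ∈ U, 0 < h p)
    (hc : ∀ p ∈ U, (u p - h p) * (u p + h p) ≠ 0)
    (hhC : ContDiffOn ℝ 2 h U) (huC : ContDiffOn ℝ 2 u U)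
    (heuler : IsEulerSound γ m U h u) :
    ∀ p ∈ U,
      Dc (fun q => u q - h q) (bet γ m h u) p
        = -((1 + γ) / 4) * bet γ m h u p ^ 2
          - (3 - γ) / 4 * (alp γ m h u p * bet γ m h u p)
          + ((m : ℝ) * (u p + h p) / (2 * p.1 * (u p - h p) ^ 2)
              * ((γ - 1) / 2 * u p ^ 2 - h p ^ 2)) * alp γ m h u p
          - ((m : ℝ) / (p.1 * (u p - h p) ^ 2)
              * ((γ - 1) / 4 * u p ^ 3 - 1 / 2 * h p ^ 3
                - (γ - 1) / 4 * u p ^ 2 * h p + 1 / 2 * u p * h p ^ 2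
                + h p * u p * (u p - h p) / (u p + h p)
                  * (h p + (γ - 1) / 2 * u p))) * bet γ m h u p := by
  intro p hp
  obtain ⟨e1, e2⟩ := heuler p hp
  have hr0 : p.1 ≠ 0 := ne_of_gt (hUr p hp)
  have hum : u p - h p ≠ 0 := fun hh => hc p hp (by rw [hh, zero_mul])
  have hup : u p + h p ≠ 0 := fun hh => hc p hp (by rw [hh, mul_zero])
  have hγ1 : γ - 1 ≠ 0 := sub_ne_zero.2 (ne_of_gt hγ)
  have hU2 : U ∈ nhds p := hU.mem_nhds hp
  have hhat : ContDiffAt ℝ 2 h p := hhC.contDiffAt hU2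
  have huat : ContDiffAt ℝ 2 u p := huC.contDiffAt hU2
  have dh : DifferentiableAt ℝ h p := hhat.differentiableAt (by norm_num)
  have du : DifferentiableAt ℝ u p := huat.differentiableAt (by norm_num)
  have dh' : DifferentiableAt ℝ (fderiv ℝ h) p :=
    (((hhC.fderiv_of_isOpen hU (by norm_num : (1:WithTop ℕ∞) + 1 ≤ 2)).contDiffAt
      hU2).differentiableAt (by norm_num))
  have du' : DifferentiableAt ℝ (fderiv ℝ u) p :=
    (((huC.fderiv_of_isOpen hU (by norm_num : (1:WithTop ℕ∞) + 1 ≤ 2)).contDiffAt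
      hU2).differentiableAt (by norm_num))
  have dhr : DifferentiableAt ℝ (pdr h) p :=
    dh'.clm_apply (differentiableAt_const (((1:ℝ), (0:ℝ))))
  have dht : DifferentiableAt ℝ (pdt h) p :=
    dh'.clm_apply (differentiableAt_const (((0:ℝ), (1:ℝ))))
  have dur : DifferentiableAt ℝ (pdr u) p :=
    du'.clm_apply (differentiableAt_const (((1:ℝ), (0:ℝ))))
  have dut : DifferentiableAt ℝ (pdt u) p :=
    du'.clm_apply (differentiableAt_const (((0:ℝ), (1:ℝ))))
  have hDh2 : ∀ v w : ℝ × ℝ, fderiv ℝ (fun q => fderiv ℝ h q w) p v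
      = fderiv ℝ (fderiv ℝ h) p v w := by
    intro v w
    rw [fderiv_clm_apply dh' (differentiableAt_const w)]
    simp
  have hDu2 : ∀ v w : ℝ × ℝ, fderiv ℝ (fun q => fderiv ℝ u q w) p v
      = fderiv ℝ (fderiv ℝ u) p v w := by
    intro v w
    rw [fderiv_clm_apply du' (differentiableAt_const w)]
    simp
  have hsh : IsSymmSndFDerivAt ℝ h p := hhat.isSymmSndFDerivAt (by simp [minSmoothness_of_isRCLikeNormedField])
  have hsu : IsSymmSndFDerivAt ℝ u p := huat.isSymmSndFDerivAt (by simp [minSmoothness_of_isRCLikeNormedField])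
  have hclh : fderiv ℝ (pdt h) p (1, 0) = fderiv ℝ (pdr h) p (0, 1) := by
    have e1' : pdt h = fun q => fderiv ℝ h q (0, 1) := rfl
    have e2' : pdr h = fun q => fderiv ℝ h q (1, 0) := rfl
    rw [e1', e2', hDh2, hDh2]
    exact hsh (1, 0) (0, 1)
  have hclu : fderiv ℝ (pdt u) p (1, 0) = fderiv ℝ (pdr u) p (0, 1) := by
    have e1' : pdt u = fun q => fderiv ℝ u q (0, 1) := rfl
    have e2' : pdr u = fun q => fderiv ℝ u q (1, 0) := rfl
    rw [e1', e2', hDu2, hDu2]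
    exact hsu (1, 0) (0, 1)
  -- derivative of bet
  have dN : DifferentiableAt ℝ (fun q => (m:ℝ) * h q * u q) p :=
    ((differentiableAt_const _).mul dh).mul du
  have dDen : DifferentiableAt ℝ (fun q => q.1 * (u q - h q)) p :=
    (differentiableAt_fst (E := ℝ)).mul (du.sub dh)
  have hD0 : p.1 * (u p - h p) ≠ 0 := mul_ne_zero hr0 hum
  have hbet_eq : bet γ m h u
      = fun q => pdr u q - 2 / (γ - 1) * pdr h q
          - (m : ℝ) * h q * u q / (q.1 * (u q - h q)) := rfl
  have dbet : ∀ v : ℝ × ℝ, fderiv ℝ (bet γ m h u) p v =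
      fderiv ℝ (pdr u) p v - 2 / (γ - 1) * fderiv ℝ (pdr h) p v
        - (((m:ℝ) * fderiv ℝ h p v * u p + (m:ℝ) * h p * fderiv ℝ u p v) * (p.1 * (u p - h p))
            - (m:ℝ) * h p * u p
              * (v.1 * (u p - h p) + p.1 * (fderiv ℝ u p v - fderiv ℝ h p v)))
          / (p.1 * (u p - h p)) ^ 2 := by
    intro v
    rw [hbet_eq]
    rw [pd_sub (dur.fun_sub ((differentiableAt_const _).fun_mul dhr)) (pd_divAt dN dDen hD0),
        pd_sub dur ((differentiableAt_const _).fun_mul dhr),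
        pd_const_mul _ dhr,
        pd_div dN dDen hD0,
        pd_mul ((differentiableAt_const _).fun_mul dh) du,
        pd_const_mul _ dh,
        pd_mul differentiableAt_fst (du.fun_sub dh),
        pd_sub du dh, pd_fst]
    try ring
  -- differentiated Euler equations
  have dNum1 : DifferentiableAt ℝ (fun q => (m:ℝ) * u q * h q) p :=
    ((differentiableAt_const _).mul du).mul dh
  have dfst : DifferentiableAt ℝ (fun q : ℝ × ℝ => q.1) p := differentiableAt_fst
  have hF1 : (fun q => pdt h q + u q * pdr h q + (γ - 1) / 2 * h q * pdr u q
      + (γ - 1) / 2 * ((m:ℝ) * u q * h q / q.1)) =ᶠ[nhds p] (fun _ => (0:ℝ)) := by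
    filter_upwards [hU2] with q hq
    have h1 := (heuler q hq).1
    linarith
  have hdF1 : fderiv ℝ (fun q => pdt h q + u q * pdr h q + (γ - 1) / 2 * h q * pdr u q
      + (γ - 1) / 2 * ((m:ℝ) * u q * h q / q.1)) p (1, 0) = 0 := by
    rw [hF1.fderiv_eq]; simp
  rw [pd_add ((dht.fun_add (du.fun_mul dhr)).fun_add (((differentiableAt_const _).fun_mul dh).fun_mul dur))
        ((differentiableAt_const _).fun_mul (pd_divAt dNum1 dfst hr0)),
      pd_add (dht.fun_add (du.fun_mul dhr)) (((differentiableAt_const _).fun_mul dh).fun_mul dur),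
      pd_add dht (du.fun_mul dhr),
      pd_mul du dhr,
      pd_mul ((differentiableAt_const _).fun_mul dh) dur,
      pd_const_mul _ dh,
      pd_const_mul _ (pd_divAt dNum1 dfst hr0),
      pd_div dNum1 dfst hr0,
      pd_mul ((differentiableAt_const _).fun_mul du) dh,
      pd_const_mul _ du, pd_fst] at hdF1
  have hF2 : (fun q => pdt u q + u q * pdr u q + 2 / (γ - 1) * h q * pdr h q)
      =ᶠ[nhds p] (fun _ => (0:ℝ)) := by
    filter_upwards [hU2] with q hq
    exact (heuler q hq).2
  have hdF2 : fderiv ℝ (fun q => pdt u q + u q * pdr u q + 2 / (γ - 1) * h q * pdr h q)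
      p (1, 0) = 0 := by
    rw [hF2.fderiv_eq]; simp
  rw [pd_add (dut.fun_add (du.fun_mul dur)) (((differentiableAt_const _).fun_mul dh).fun_mul dhr),
      pd_add dut (du.fun_mul dur),
      pd_mul du dur,
      pd_mul ((differentiableAt_const _).fun_mul dh) dhr,
      pd_const_mul _ dh] at hdF2
  -- convert mixed partials
  rw [hclh] at hdF1
  rw [hclu] at hdF2
  -- normalize everything to fderiv atoms
  simp only [pdr, pdt] at e1 e2 hdF1 hdF2 ⊢
  simp only [Dc, bet, alp, pdr, pdt]
  rw [dbet, dbet]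
  norm_num at hdF1 hdF2 ⊢
  -- solved forms
  have hHt : fderiv ℝ h p (0, 1)
      = -(u p * fderiv ℝ h p (1, 0)) - (γ - 1) / 2 * h p * fderiv ℝ u p (1, 0)
        - (γ - 1) / 2 * ((m:ℝ) * u p * h p / p.1) := by linear_combination e1
  have hUt : fderiv ℝ u p (0, 1)
      = -(u p * fderiv ℝ u p (1, 0)) - 2 / (γ - 1) * h p * fderiv ℝ h p (1, 0) := by
    linear_combination e2
  have hHrt : fderiv ℝ (pdr h) p (0, 1)
      = -(fderiv ℝ u p (1, 0) * fderiv ℝ h p (1, 0)) - u p * fderiv ℝ (pdr h) p (1, 0)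
        - (γ - 1) / 2 * fderiv ℝ h p (1, 0) * fderiv ℝ u p (1, 0)
        - (γ - 1) / 2 * h p * fderiv ℝ (pdr u) p (1, 0)
        - (γ - 1) / 2
            * ((((m:ℝ) * fderiv ℝ u p (1, 0) * h p + (m:ℝ) * u p * fderiv ℝ h p (1, 0)) * p.1
                - (m:ℝ) * u p * h p) / p.1 ^ 2) := by
    linear_combination hdF1
  have hUrt : fderiv ℝ (pdr u) p (0, 1)
      = -(fderiv ℝ u p (1, 0) * fderiv ℝ u p (1, 0)) - u p * fderiv ℝ (pdr u) p (1, 0)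
        - 2 / (γ - 1) * fderiv ℝ h p (1, 0) * fderiv ℝ h p (1, 0)
        - 2 / (γ - 1) * h p * fderiv ℝ (pdr h) p (1, 0) := by
    linear_combination hdF2
  rw [hHt, hUt, hHrt, hUrt]
  field_simp
  ring
end

section
/- Let (h,u) be a C¹ smooth solution of the radially symmetric isentropic Euler equations in sound-speed form on an open set contained in {r > 0}, with h > 0 and c₁ c₂ ≠ 0 everywhere on that set. Then at every point, ∂₁ h = −((γ−1)/2) h^{(γ+1)/(2(γ−1))} ( α̃ + (m u²/(r c₂)) h^{(γ−3)/(2(γ−1))} ). -/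
/-! The mass equation gives `∂₁h = -((γ-1)/2) h (u_r + (2/(γ-1)) h_r + m u / r)`. Adding
`m u² / (r c₂)` to the source term `m h u / (r c₂)` of `α` collapses it to `m u / r`, so
`∂₁h = -((γ-1)/2) h (α + m u² / (r c₂))`; finally `h` splits as
`h^{(γ+1)/(2(γ-1))} · h^{(γ-3)/(2(γ-1))}`, the second factor being the weight of `α̃`. -/

open Real Set

lemma rpow_mul_rpow_of_add_eq_one {x a b : ℝ} (hx : 0 < x) (hab : a + b = 1) :
    x ^ a * x ^ b = x := by
  rw [← rpow_add hx, hab, rpow_one]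

lemma Dc_sub_eq_of_isEulerSound {γ : ℝ} (hγ : γ ≠ 1) {m : ℕ} {U : Set (ℝ × ℝ)} {h u : ℝ × ℝ → ℝ}
    (heuler : IsEulerSound γ m U h u) {p : ℝ × ℝ} (hp : p ∈ U) :
    Dc (fun q => u q - h q) h p
      = -((γ - 1) / 2) * h p * (pdr u p + 2 / (γ - 1) * pdr h p + (m : ℝ) * u p / p.1) := by
  have hγ1 : γ - 1 ≠ 0 := sub_ne_zero.mpr hγ
  have hcoef : (γ - 1) / 2 * (2 / (γ - 1)) = 1 := by field_simp
  unfold Dc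
  linear_combination (heuler p hp).1 + (h p * pdr h p) * hcoef

lemma alp_add_eq {γ : ℝ} {m : ℕ} {h u : ℝ × ℝ → ℝ} {p : ℝ × ℝ} (hc₂ : u p + h p ≠ 0) :
    alp γ m h u p + (m : ℝ) * u p ^ 2 / (p.1 * (u p + h p))
      = pdr u p + 2 / (γ - 1) * pdr h p + (m : ℝ) * u p / p.1 := by
  have hsum : (m : ℝ) * h p * u p / (p.1 * (u p + h p)) + (m : ℝ) * u p ^ 2 / (p.1 * (u p + h p))
      = (m : ℝ) * u p / p.1 := by
    rw [← add_div, show (m : ℝ) * h p * u p + (m : ℝ) * u p ^ 2 = (m : ℝ) * u p * (u p + h p) by ring,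
      mul_div_mul_right _ _ hc₂]
  rw [alp, add_assoc, hsum]

theorem d1_h_equation_general
    (γ : ℝ) (hγ : 1 < γ) (m : ℕ)
    (U : Set (ℝ × ℝ))
    (h u : ℝ × ℝ → ℝ) (hhpos : ∀ p ∈ U, 0 < h p)
    (hc : ∀ p ∈ U, (u p - h p) * (u p + h p) ≠ 0)
    (heuler : IsEulerSound γ m U h u) :
    ∀ p ∈ U,
      Dc (fun q => u q - h q) h p
        = -((γ - 1) / 2) * h p ^ ((γ + 1) / (2 * (γ - 1)))
            * (alpT γ m h u p
              + (m : ℝ) * u p ^ 2 / (p.1 * (u p + h p))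
                * h p ^ ((γ - 3) / (2 * (γ - 1)))) := by
  intro p hp
  have hweights : h p ^ ((γ + 1) / (2 * (γ - 1))) * h p ^ ((γ - 3) / (2 * (γ - 1))) = h p := by
    refine rpow_mul_rpow_of_add_eq_one (hhpos p hp) ?_
    field_simp [(sub_pos.mpr hγ).ne']
    ring
  calc Dc (fun q => u q - h q) h p
      = -((γ - 1) / 2) * h p * (alp γ m h u p + (m : ℝ) * u p ^ 2 / (p.1 * (u p + h p))) := by
        rw [Dc_sub_eq_of_isEulerSound hγ.ne' heuler hp,
          alp_add_eq (right_ne_zero_of_mul (hc p hp))]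
    _ = -((γ - 1) / 2) * (h p ^ ((γ + 1) / (2 * (γ - 1))) * h p ^ ((γ - 3) / (2 * (γ - 1))))
          * (alp γ m h u p + (m : ℝ) * u p ^ 2 / (p.1 * (u p + h p))) := by
        rw [hweights]
    _ = _ := by
        rw [alpT]
        ring

/-- for a `C¹` smooth solution with `h > 0` and `c₁c₂ ≠ 0`,
`∂₁h = -((γ-1)/2) h^{(γ+1)/(2(γ-1))} (α̃ + (mu²/(rc₂)) h^{(γ-3)/(2(γ-1))})`. -/
theorem d1_h_equation
    (γ : ℝ) (hγ : 1 < γ) (m : ℕ) (hm : 1 ≤ m)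
    (U : Set (ℝ × ℝ)) (hU : IsOpen U) (hUr : ∀ p ∈ U, 0 < p.1)
    (h u : ℝ × ℝ → ℝ) (hhpos : ∀ p ∈ U, 0 < h p)
    (hc : ∀ p ∈ U, (u p - h p) * (u p + h p) ≠ 0)
    (hhC : ContDiffOn ℝ 1 h U) (huC : ContDiffOn ℝ 1 u U)
    (heuler : IsEulerSound γ m U h u) :
    ∀ p ∈ U,
      Dc (fun q => u q - h q) h p
        = -((γ - 1) / 2) * h p ^ ((γ + 1) / (2 * (γ - 1)))
            * (alpT γ m h u p
              + (m : ℝ) * u p ^ 2 / (p.1 * (u p + h p))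
                * h p ^ ((γ - 3) / (2 * (γ - 1)))) :=
  d1_h_equation_general γ hγ m U h u hhpos hc heuler
end

section
/- Let γ ≥ 3, m ≥ 1 an integer, and let r₀ > 0, ū > 0, u̲ > 0, h̄ > 0 with h̄ ≤ ū/2. Let (h,u) be a C¹ smooth solution of the radially symmetric isentropic Euler equations in sound-speed form, and suppose at some point (r,t) with r ≥ r₀ one has u ≤ −ū, −(u̲ + h̄) ≤ u, 0 < h ≤ h̄, and α̃ > α_* := (2m(u̲ + h̄)/r₀) h̄^{(γ−3)/(2(γ−1))}. Then at that point ∂₁ c₂ < 0, where c₂ = u + h. -/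
open Real Set

private lemma keylemma (γ mv h0 up ur ut hr' ht' r c2 : ℝ) (hγ1 : 0 < γ - 1)
    (hrne : r ≠ 0) (hc2ne : c2 ≠ 0) (hc2 : c2 = up + h0)
    (hute : ut = -(up * ur) - 2 / (γ - 1) * h0 * hr')
    (hhte : ht' = -((γ - 1) / 2) * (mv * up * h0 / r) - up * hr' - (γ - 1) / 2 * h0 * ur) :
    (ut + ht' + (up - h0) * (ur + hr')) * (2 * r * c2)
      = -(γ + 1) * h0 * (ur + 2 / (γ - 1) * hr' + mv * h0 * up / (r * c2)) * (r * c2)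
        + mv * h0 * up * (2 * h0 - (γ - 1) * up) := by
  subst hute hhte hc2
  field_simp
  ring

private lemma aux2 (D r c2 : ℝ) (hpos : 0 < D * (2 * r * c2)) (hr : 0 < r)
    (hc2 : c2 < 0) : D < 0 := by
  nlinarith [mul_pos hr (neg_pos.mpr hc2)]

private lemma aux1 (γ mR h0 c2 r r0 ulo hhi A α up : ℝ)
    (hγ : 3 ≤ γ) (hm : 1 ≤ mR) (hr0 : 0 < r0) (hpr : r0 ≤ r)
    (hh : 0 < h0) (hhhi : 0 < hhi) (hh1 : h0 ≤ hhi) (hulo : 0 < ulo)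
    (hc2 : c2 < 0) (hu2c2 : 2 * c2 ≤ up) (hup : up < 0)
    (hu2 : -(ulo + hhi) ≤ up)
    (hA : A = 2 * mR * (ulo + hhi) / r0) (hαA : A < α) :
    0 < -(γ + 1) * h0 * α * (r * c2) + mR * h0 * up * (2 * h0 - (γ - 1) * up) := by
  have hB : 0 < -c2 := by linarith
  have hXpos : 0 < 2 * h0 - (γ - 1) * up := by nlinarith
  have hXbd : 2 * h0 - (γ - 1) * up ≤ 2 * hhi + (γ - 1) * (ulo + hhi) := by nlinarith
  have hApos : 0 < A := by
    rw [hA]; apply div_pos _ hr0; nlinarith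
  have hAr0 : A * r0 = 2 * mR * (ulo + hhi) := by
    rw [hA]; field_simp
  have hpl : 0 < (γ + 1) * h0 := by nlinarith
  have hrB : 0 < r * -c2 := mul_pos (by linarith) hB
  have stepB : (γ + 1) * h0 * A * (r0 * -c2) < (γ + 1) * h0 * α * (r * -c2) := by
    have h1 : (γ + 1) * h0 * A * (r0 * -c2) ≤ (γ + 1) * h0 * A * (r * -c2) := by
      apply mul_le_mul_of_nonneg_left
      · nlinarith
      · nlinarith
    have h2 := mul_lt_mul_of_pos_right (mul_lt_mul_of_pos_left hαA hpl) hrB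
    calc (γ + 1) * h0 * A * (r0 * -c2) ≤ (γ + 1) * h0 * A * (r * -c2) := h1
      _ < (γ + 1) * h0 * α * (r * -c2) := h2
  have hmh : (0:ℝ) ≤ mR * h0 := by nlinarith
  have stepA : -(2 * mR * h0 * -c2 * (2 * hhi + (γ - 1) * (ulo + hhi)))
      ≤ mR * h0 * up * (2 * h0 - (γ - 1) * up) := by
    have h1 : mR * h0 * (2 * c2) * (2 * h0 - (γ - 1) * up)
        ≤ mR * h0 * up * (2 * h0 - (γ - 1) * up) :=
      mul_le_mul_of_nonneg_right (mul_le_mul_of_nonneg_left hu2c2 hmh) (le_of_lt hXpos)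
    have h2 := mul_le_mul_of_nonneg_left hXbd
      (by nlinarith : (0:ℝ) ≤ 2 * mR * h0 * -c2)
    nlinarith [h1, h2]
  have hmain : 2 * mR * h0 * -c2 * (2 * hhi + (γ - 1) * (ulo + hhi))
      < (γ + 1) * h0 * A * (r0 * -c2) := by
    have e : (γ + 1) * h0 * A * (r0 * -c2) = (γ + 1) * h0 * -c2 * (A * r0) := by ring
    rw [e, hAr0]
    nlinarith [mul_pos (mul_pos (mul_pos hh hB) hulo) (by linarith : (0:ℝ) < mR)]
  linarith [stepA, stepB, hmain]

/-- for `γ ≥ 3`, `h̄ ≤ ū/2`, at any point of a `C¹` smooth solution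
where `r ≥ r₀`, `-(u̲+h̄) ≤ u ≤ -ū`, `0 < h ≤ h̄`, and
`α̃ > α_* = (2m(u̲+h̄)/r₀) h̄^{(γ-3)/(2(γ-1))}`, one has `∂₁c₂ < 0`. -/
theorem d1_c2_negative
    (γ : ℝ) (hγ : 3 ≤ γ) (m : ℕ) (hm : 1 ≤ m)
    (r0 uhi ulo hhi : ℝ)
    (hr0 : 0 < r0) (huhi : 0 < uhi) (hulo : 0 < ulo) (hhhi : 0 < hhi)
    (hhu : hhi ≤ uhi / 2)
    (U : Set (ℝ × ℝ)) (hU : IsOpen U) (hUr : ∀ p ∈ U, 0 < p.1)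
    (h u : ℝ × ℝ → ℝ) (hhpos : ∀ p ∈ U, 0 < h p)
    (hhC : ContDiffOn ℝ 1 h U) (huC : ContDiffOn ℝ 1 u U)
    (heuler : IsEulerSound γ m U h u)
    (p : ℝ × ℝ) (hp : p ∈ U) (hpr : r0 ≤ p.1)
    (hu1 : u p ≤ -uhi) (hu2 : -(ulo + hhi) ≤ u p) (hh1 : h p ≤ hhi)
    (ha : 2 * (m : ℝ) * (ulo + hhi) / r0 * hhi ^ ((γ - 3) / (2 * (γ - 1)))
        < alpT γ m h u p) :
    Dc (fun q => u q - h q) (fun q => u q + h q) p < 0 := by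
  obtain ⟨e1, e2⟩ := heuler p hp
  have hmem : U ∈ nhds p := hU.mem_nhds hp
  have hdu : DifferentiableAt ℝ u p :=
    ((huC.differentiableOn one_ne_zero) p hp).differentiableAt hmem
  have hdh : DifferentiableAt ℝ h p :=
    ((hhC.differentiableOn one_ne_zero) p hp).differentiableAt hmem
  set r : ℝ := p.1 with hr
  have rpos : 0 < r := hUr p hp
  have hpos : 0 < h p := hhpos p hp
  set ur := pdr u p with hur
  set ut := pdt u p with hut0
  set hr' := pdr h p with hhr0
  set ht' := pdt h p with hht0
  have hγ1 : (0:ℝ) < γ - 1 := by linarith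
  set c2 : ℝ := u p + h p with hc2def
  have hc2half : c2 ≤ u p / 2 := by
    have : h p ≤ -u p / 2 := by nlinarith
    simp only [hc2def]; linarith
  have hc2neg : c2 < 0 := by nlinarith
  have hc2ne : c2 ≠ 0 := ne_of_lt hc2neg
  have hrne : r ≠ 0 := ne_of_gt rpos
  have hsum_t : pdt (fun q => u q + h q) p = ut + ht' := by
    simp only [pdt, fderiv_fun_add hdu hdh, ContinuousLinearMap.add_apply]
    rfl
  have hsum_r : pdr (fun q => u q + h q) p = ur + hr' := by
    simp only [pdr, fderiv_fun_add hdu hdh, ContinuousLinearMap.add_apply]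
    rfl
  set e : ℝ := (γ - 3) / (2 * (γ - 1)) with he
  have hee : 0 ≤ e := by
    rw [he]; apply div_nonneg <;> linarith
  set A : ℝ := 2 * (m : ℝ) * (ulo + hhi) / r0 with hA
  have hmpos : (1:ℝ) ≤ (m:ℝ) := by exact_mod_cast hm
  have hApos : 0 < A := by
    rw [hA]; apply div_pos _ hr0; nlinarith
  set α : ℝ := alp γ m h u p with hαdef
  have hαA : A < α := by
    have hw : h p ^ e ≤ hhi ^ e := Real.rpow_le_rpow (le_of_lt hpos) hh1 hee
    have hwpos : 0 < h p ^ e := Real.rpow_pos_of_pos hpos e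
    have hwbpos : 0 < hhi ^ e := Real.rpow_pos_of_pos hhhi e
    have ha' : A * hhi ^ e < h p ^ e * α := by
      have h1 := ha
      simp only [alpT] at h1
      rw [← he, ← hαdef] at h1
      exact h1
    have hαpos : 0 < α := by
      by_contra hcon
      push_neg at hcon
      have h4 : h p ^ e * α ≤ 0 := mul_nonpos_of_nonneg_of_nonpos (le_of_lt hwpos) hcon
      have h5 : 0 < A * hhi ^ e := mul_pos hApos hwbpos
      linarith
    have h2 : A * hhi ^ e < α * hhi ^ e := by
      have h3 : h p ^ e * α ≤ hhi ^ e * α := mul_le_mul_of_nonneg_right hw (le_of_lt hαpos)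
      calc A * hhi ^ e < h p ^ e * α := ha'
        _ ≤ hhi ^ e * α := h3
        _ = α * hhi ^ e := mul_comm _ _
    exact lt_of_mul_lt_mul_right h2 (le_of_lt hwbpos)
  have hute : ut = -(u p * ur) - 2 / (γ - 1) * h p * hr' := by linarith
  have hhte : ht' = -((γ - 1) / 2) * ((m : ℝ) * u p * h p / r)
      - u p * hr' - (γ - 1) / 2 * h p * ur := by linarith
  set D : ℝ := Dc (fun q => u q - h q) (fun q => u q + h q) p with hDdef
  have hDval : D = ut + ht' + (u p - h p) * (ur + hr') := by
    rw [hDdef, Dc, hsum_t, hsum_r]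
  have hαval : α = ur + 2 / (γ - 1) * hr' + (m : ℝ) * h p * u p / (r * c2) := by
    rw [hαdef, alp, ← hr, ← hc2def, ← hur, ← hhr0]
  clear_value D α A e c2 ur ut hr' ht' r
  have key : D * (2 * r * c2)
      = -(γ + 1) * h p * α * (r * c2) + (m : ℝ) * h p * u p * (2 * h p - (γ - 1) * u p) := by
    rw [hDval, hαval]
    exact keylemma γ (m:ℝ) (h p) (u p) ur ut hr' ht' r c2 hγ1 hrne hc2ne hc2def hute hhte
  have keypos : 0 < D * (2 * r * c2) := by
    rw [key]
    exact aux1 γ (m:ℝ) (h p) c2 r r0 ulo hhi A α (u p) hγ hmpos hr0 hpr hpos hhhi hh1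
      hulo hc2neg (by linarith) (by linarith) hu2 hA hαA
  exact aux2 D r c2 keypos rpos hc2neg
end

section
/- Let γ ≥ 3, m ≥ 1 an integer, and let r₀ > 0, ū > 0, u̲ > 0, h̄ > 0 with h̄ ≤ ū/2. Let (h,u) be a C¹ smooth solution of the radially symmetric isentropic Euler equations in sound-speed form, and suppose at some point (r,t) with r ≥ r₀ one has u ≤ −ū, 0 < h ≤ h̄, and α̃ ≥ α_* := (2m(u̲ + h̄)/r₀) h̄^{(γ−3)/(2(γ−1))}. Then at that point α̃ − (m u h/(r c₂)) h^{(γ−3)/(2(γ−1))} ≥ (2m u̲/r₀) h̄^{(γ−3)/(2(γ−1))} > 0, and consequently ∂₁ u < 0. -/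
open Real Set

set_option maxHeartbeats 1000000 in
/-- for `γ ≥ 3`, `h̄ ≤ ū/2`, at any point of a `C¹` smooth solution
where `r ≥ r₀`, `u ≤ -ū`, `0 < h ≤ h̄`, and
`α̃ ≥ α_* = (2m(u̲+h̄)/r₀) h̄^{(γ-3)/(2(γ-1))}`, one has
`α̃ - (muh/(rc₂)) h^{(γ-3)/(2(γ-1))} ≥ (2mu̲/r₀) h̄^{(γ-3)/(2(γ-1))} > 0`, and
consequently `∂₁u < 0`. -/
theorem d1_u_negative
    (γ : ℝ) (hγ : 3 ≤ γ) (m : ℕ) (hm : 1 ≤ m)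
    (r0 uhi ulo hhi : ℝ)
    (hr0 : 0 < r0) (huhi : 0 < uhi) (hulo : 0 < ulo) (hhhi : 0 < hhi)
    (hhu : hhi ≤ uhi / 2)
    (U : Set (ℝ × ℝ)) (hU : IsOpen U) (hUr : ∀ p ∈ U, 0 < p.1)
    (h u : ℝ × ℝ → ℝ) (hhpos : ∀ p ∈ U, 0 < h p)
    (hhC : ContDiffOn ℝ 1 h U) (huC : ContDiffOn ℝ 1 u U)
    (heuler : IsEulerSound γ m U h u)
    (p : ℝ × ℝ) (hp : p ∈ U) (hpr : r0 ≤ p.1)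
    (hu1 : u p ≤ -uhi) (hh1 : h p ≤ hhi)
    (ha : 2 * (m : ℝ) * (ulo + hhi) / r0 * hhi ^ ((γ - 3) / (2 * (γ - 1)))
        ≤ alpT γ m h u p) :
    (alpT γ m h u p
        - (m : ℝ) * u p * h p / (p.1 * (u p + h p)) * h p ^ ((γ - 3) / (2 * (γ - 1)))
      ≥ 2 * (m : ℝ) * ulo / r0 * hhi ^ ((γ - 3) / (2 * (γ - 1)))) ∧
    0 < 2 * (m : ℝ) * ulo / r0 * hhi ^ ((γ - 3) / (2 * (γ - 1))) ∧
    Dc (fun q => u q - h q) u p < 0 := by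
  obtain ⟨he1, he2⟩ := heuler p hp
  have hrpos : 0 < p.1 := hUr p hp
  have hH : 0 < h p := hhpos p hp
  have hw0 : 0 ≤ (γ - 3) / (2 * (γ - 1)) := div_nonneg (by linarith) (by linarith)
  have hhw : 0 < h p ^ ((γ - 3) / (2 * (γ - 1))) := Real.rpow_pos_of_pos hH _
  have hHw : 0 < hhi ^ ((γ - 3) / (2 * (γ - 1))) := Real.rpow_pos_of_pos hhhi _
  have hhw_le : h p ^ ((γ - 3) / (2 * (γ - 1))) ≤ hhi ^ ((γ - 3) / (2 * (γ - 1))) :=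
    Real.rpow_le_rpow hH.le hh1 hw0
  have hc2neg : u p + h p < 0 := by linarith
  have hratio : u p / (u p + h p) ≤ 2 := by
    rw [div_le_iff_of_neg hc2neg]; linarith
  have hTeq : (m : ℝ) * u p * h p / (p.1 * (u p + h p))
      = ((m : ℝ) * h p / p.1) * (u p / (u p + h p)) := by
    field_simp
  have hmh : (0:ℝ) ≤ (m : ℝ) * h p / p.1 :=
    div_nonneg (mul_nonneg (Nat.cast_nonneg m) hH.le) hrpos.le
  have hT : (m : ℝ) * u p * h p / (p.1 * (u p + h p)) ≤ 2 * (m : ℝ) * h p / p.1 := by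
    rw [hTeq]
    calc ((m : ℝ) * h p / p.1) * (u p / (u p + h p)) ≤ ((m : ℝ) * h p / p.1) * 2 :=
          mul_le_mul_of_nonneg_left hratio hmh
      _ = 2 * (m : ℝ) * h p / p.1 := by ring
  have hT2 : 2 * (m : ℝ) * h p / p.1 ≤ 2 * (m : ℝ) * hhi / r0 := by
    have hm1 : (1:ℝ) ≤ (m:ℝ) := by exact_mod_cast hm
    apply div_le_div₀ (by positivity) (by nlinarith) hr0 hpr
  have hTnonneg : 0 ≤ (m : ℝ) * u p * h p / (p.1 * (u p + h p)) := by
    rw [hTeq]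
    apply mul_nonneg hmh
    rw [le_div_iff_of_neg hc2neg]
    nlinarith
  have hTw : (m : ℝ) * u p * h p / (p.1 * (u p + h p)) * h p ^ ((γ - 3) / (2 * (γ - 1)))
      ≤ 2 * (m : ℝ) * hhi / r0 * hhi ^ ((γ - 3) / (2 * (γ - 1))) := by
    apply mul_le_mul (hT.trans hT2) hhw_le hhw.le
    positivity
  have hexp : 2 * (m : ℝ) * (ulo + hhi) / r0 * hhi ^ ((γ - 3) / (2 * (γ - 1)))
      = 2 * (m : ℝ) * ulo / r0 * hhi ^ ((γ - 3) / (2 * (γ - 1)))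
        + 2 * (m : ℝ) * hhi / r0 * hhi ^ ((γ - 3) / (2 * (γ - 1))) := by ring
  have goal1 : alpT γ m h u p
      - (m : ℝ) * u p * h p / (p.1 * (u p + h p)) * h p ^ ((γ - 3) / (2 * (γ - 1)))
      ≥ 2 * (m : ℝ) * ulo / r0 * hhi ^ ((γ - 3) / (2 * (γ - 1))) := by
    rw [hexp] at ha; linarith
  have goal2 : 0 < 2 * (m : ℝ) * ulo / r0 * hhi ^ ((γ - 3) / (2 * (γ - 1))) := by
    have : (1:ℝ) ≤ (m : ℝ) := Nat.one_le_cast.mpr hm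
    positivity
  refine ⟨goal1, goal2, ?_⟩
  set A := pdr u p + 2 / (γ - 1) * pdr h p with hA
  have hkey : alpT γ m h u p
      - (m : ℝ) * u p * h p / (p.1 * (u p + h p)) * h p ^ ((γ - 3) / (2 * (γ - 1)))
      = h p ^ ((γ - 3) / (2 * (γ - 1))) * A := by
    simp only [alpT, alp, hA]; ring
  have hApos : 0 < A := by
    have h1 : 0 < h p ^ ((γ - 3) / (2 * (γ - 1))) * A := by
      rw [← hkey]; linarith
    rcases mul_pos_iff.mp h1 with ⟨_, h2⟩ | ⟨h2, _⟩
    · exact h2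
    · linarith
  have hDc : Dc (fun q => u q - h q) u p = -(h p * A) := by
    simp only [Dc, hA]
    linear_combination he2
  rw [hDc]
  nlinarith [mul_pos hH hApos]
end
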